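/- For every family of bijections (α_k)_{k∈ℕ} as in the definition of 3SATC, the Boolean function family 3SATC = (3SATC_n)_{n∈ℕ} belongs to PLSIS. -/

import Mathlib

/-- Boolean register names: `inp i` is input register `in:(i+1)`,
`aux i` is auxiliary register `aux:(i+1)`, `out` is the output register. -/
inductive Reg where
  | inp : ℕ → Reg
  | aux : ℕ → Reg
  | out : Reg
deriving DecidableEq

/-- Basic instructions: register reads/writes, and (for splitting instruction
sequences) `split p` and `reply p` for Boolean parameters `p`. -/
inductive BInstr where
  | get : Reg → BInstr
  | set : Reg → Bool → BInstr
  | split : ℕ → BInstr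
  | reply : ℕ → BInstr
deriving DecidableEq

/-- Primitive instructions. -/
inductive PInstr where
  | plain : BInstr → PInstr
  | pos : BInstr → PInstr
  | neg : BInstr → PInstr
  | jump : ℕ → PInstr
  | halt : PInstr
deriving DecidableEq

abbrev RegState := Reg → Bool

/-- State change caused by processing a basic instruction. -/
def BInstr.effect : BInstr → RegState → RegState
  | .set r b, s => Function.update s r b
  | _, s => s

/-- Reply produced by processing a basic instruction. -/
def BInstr.rpl : BInstr → RegState → Bool
  | .get r, s => s r
  | .set _ b, _ => b
  | _, _ => false

def BInstr.isSplitReply : BInstr → Bool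
  | .split _ => true
  | .reply _ => true
  | _ => false

/-- Single-thread execution of an instruction sequence on Boolean registers;
`none` means deadlock, `some s` means termination in register state `s`.
(`split`/`reply` instructions make no sense here and deadlock.) -/
def exec : List PInstr → RegState → Option RegState
  | [], _ => none
  | .plain a :: X, s =>
      if a.isSplitReply then none else exec X (a.effect s)
  | .pos a :: X, s =>
      if a.isSplitReply then none
      else if a.rpl s then exec X (a.effect s) else exec (X.drop 1) (a.effect s)
  | .neg a :: X, s =>
      if a.isSplitReply then none
      else if a.rpl s then exec (X.drop 1) (a.effect s) else exec X (a.effect s)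
  | .jump 0 :: _, _ => none
  | .jump (l+1) :: X, s => exec (X.drop l) s
  | .halt :: _, s => some s
termination_by X _ => X.length
decreasing_by all_goals (simp only [List.length_drop, List.length_cons]; omega)

/-- Initial register state: input registers `in:1 .. in:n` contain
`b 0, ..., b (n-1)`; all other registers contain `false`. -/
def initState (n : ℕ) (b : Fin n → Bool) : RegState := fun r =>
  match r with
  | .inp i => if h : i < n then b ⟨i, h⟩ else false
  | _ => false

/-- `X` computes the `n`-ary Boolean function `f`: for every input, execution
terminates (does not deadlock) with the output register containing `f b`. -/
def Computes {n : ℕ} (f : (Fin n → Bool) → Bool) (X : List PInstr) : Prop :=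
  ∀ b : Fin n → Bool, ∃ s : RegState,
    exec X (initState n b) = some s ∧ s Reg.out = f b

/-- Basic instructions allowed in `IS_br`. -/
def BrBasic : BInstr → Prop
  | .get (.inp _) => True
  | .get (.aux _) => True
  | .set (.aux _) _ => True
  | .set .out _ => True
  | _ => False

/-- Basic instructions allowed in `IS_br^na`. -/
def NaBasic : BInstr → Prop
  | .get (.inp _) => True
  | .set .out _ => True
  | _ => False

def InstrBasicOK (P : BInstr → Prop) : PInstr → Prop
  | .plain a => P a
  | .pos a => P a
  | .neg a => P a
  | _ => True

/-- Membership of `IS_br` (non-empty, only allowed basic instructions). -/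
def ISbr (X : List PInstr) : Prop :=
  X ≠ [] ∧ ∀ u ∈ X, InstrBasicOK BrBasic u

/-- Membership of `IS_br^na`. -/
def ISbrna (X : List PInstr) : Prop :=
  X ≠ [] ∧ ∀ u ∈ X, InstrBasicOK NaBasic u

/-- The primitive instruction contains the basic instruction `out.set:false`. -/
def UsesOutSetFalse : PInstr → Prop
  | .plain (.set .out false) => True
  | .pos (.set .out false) => True
  | .neg (.set .out false) => True
  | _ => False

/-- The class PLIS of Boolean function families computable by
polynomial-length instruction sequences from `IS_br`. -/
def PLIS (F : (n : ℕ) → (Fin n → Bool) → Bool) : Prop :=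
  ∃ h : Polynomial ℕ, ∀ n : ℕ, ∃ X : List PInstr,
    ISbr X ∧ Computes (F n) X ∧ X.length ≤ h.eval n

/-- Basic instructions allowed in `SIS_br`. -/
def SisBasic : BInstr → Prop
  | .get (.inp _) => True
  | .set .out true => True
  | .split _ => True
  | .reply _ => True
  | _ => False

/-- Membership of `SIS_br`. -/
def SISbr (X : List PInstr) : Prop :=
  X ≠ [] ∧ ∀ u ∈ X, InstrBasicOK SisBasic u

/-- A (partial) instantiation of the Boolean parameters. -/
abbrev PEnv := ℕ → Option Bool

/-- Fueled cyclic-interleaving execution of a vector of threads (each a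
remaining instruction sequence with a parameter instantiation) sharing the
Boolean registers.  `none` means deadlock (or not enough fuel), `some s`
means successful termination of all threads in register state `s`. -/
def sexec : ℕ → List (List PInstr × PEnv) → RegState → Option RegState
  | 0, _, _ => none
  | _ + 1, [], s => some s
  | fuel + 1, (is, ρ) :: ts, s =>
    match is with
    | [] => none
    | .halt :: _ => sexec fuel ts s
    | .jump 0 :: _ => none
    | .jump (l+1) :: X => sexec fuel ((X.drop l, ρ) :: ts) s
    | .plain a :: X =>
      match a with
      | .split p =>
        match ρ p with
        | some _ => none
        | none => sexec fuel
            (ts ++ [(X, Function.update ρ p (some true)),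
                    (X, Function.update ρ p (some false))]) s
      | .reply p =>
        match ρ p with
        | none => none
        | some _ => sexec fuel (ts ++ [(X, ρ)]) s
      | _ => sexec fuel (ts ++ [(X, ρ)]) (a.effect s)
    | .pos a :: X =>
      match a with
      | .split p =>
        match ρ p with
        | some _ => none
        | none => sexec fuel
            (ts ++ [(X, Function.update ρ p (some true)),
                    (X.drop 1, Function.update ρ p (some false))]) s
      | .reply p =>
        match ρ p with
        | none => none
        | some b => sexec fuel (ts ++ [(if b then X else X.drop 1, ρ)]) s
      | _ => sexec fuel (ts ++ [(if a.rpl s then X else X.drop 1, ρ)]) (a.effect s)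
    | .neg a :: X =>
      match a with
      | .split p =>
        match ρ p with
        | some _ => none
        | none => sexec fuel
            (ts ++ [(X.drop 1, Function.update ρ p (some true)),
                    (X, Function.update ρ p (some false))]) s
      | .reply p =>
        match ρ p with
        | none => none
        | some b => sexec fuel (ts ++ [(if b then X.drop 1 else X, ρ)]) s
      | _ => sexec fuel (ts ++ [(if a.rpl s then X.drop 1 else X, ρ)]) (a.effect s)

/-- `X` splitting computes the `n`-ary Boolean function `f`. -/
def SplittingComputes {n : ℕ} (f : (Fin n → Bool) → Bool) (X : List PInstr) : Prop :=
  ∀ b : Fin n → Bool, ∃ (fuel : ℕ) (s : RegState),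
    sexec fuel [(X, fun _ => none)] (initState n b) = some s ∧ s Reg.out = f b

/-- The class PLSIS of Boolean function families splitting computable by
polynomial-length instruction sequences from `SIS_br`. -/
def PLSIS (F : (n : ℕ) → (Fin n → Bool) → Bool) : Prop :=
  ∃ h : Polynomial ℕ, ∀ n : ℕ, ∃ X : List PInstr,
    SISbr X ∧ SplittingComputes (F n) X ∧ X.length ≤ h.eval n

/-- `ndisj k` = C(2k,1) + C(2k,2) + C(2k,3), the number of non-empty sets of
at most 3 literals over the variables `v_1, ..., v_k`. -/
def ndisj (k : ℕ) : ℕ :=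
  Nat.choose (2*k) 1 + Nat.choose (2*k) 2 + Nat.choose (2*k) 3

/-- A literal is a pair (variable index, polarity): `(i, true)` is `v_i` and
`(i, false)` is `¬ v_i`.  `LitSetOK k L` says `L` is a non-empty set of at
most 3 literals over `v_1, ..., v_k`. -/
def LitSetOK (k : ℕ) (L : Finset (ℕ × Bool)) : Prop :=
  L.Nonempty ∧ L.card ≤ 3 ∧ ∀ p ∈ L, 1 ≤ p.1 ∧ p.1 ≤ k

/-- A family of bijections `α_k` from `[1, ndisj k]` to the non-empty sets of
at most 3 literals over `v_1, ..., v_k`, compatible in the sense that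
`α_{i+1}` extends `α_i`. -/
structure AlphaFamily where
  α : ℕ → ℕ → Finset (ℕ × Bool)
  maps : ∀ k i, 1 ≤ i → i ≤ ndisj k → LitSetOK k (α k i)
  inj : ∀ k i j, 1 ≤ i → i ≤ ndisj k → 1 ≤ j → j ≤ ndisj k → α k i = α k j → i = j
  surj : ∀ k L, LitSetOK k L → ∃ i, 1 ≤ i ∧ i ≤ ndisj k ∧ α k i = L
  compat : ∀ i j, 1 ≤ j → j ≤ ndisj i → α (i+1) j = α i j

/-- The largest `k` with `ndisj k ≤ n`. -/
def kOf (n : ℕ) : ℕ := Nat.findGreatest (fun k => ndisj k ≤ n) n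

/-- `3SATC_n (b_1, ..., b_n)` is `true` iff the conjunction, over all
`i ∈ [1, ndisj (kOf n)]` with `b_i = true`, of the disjunction of the
literals in `α_{kOf n} (i)` is satisfiable (here `b i` for `i : Fin n` is
`b_{i+1}`; an assignment `σ` satisfies a literal `(j, c)` iff `σ j = c`). -/
noncomputable def threeSATC (A : AlphaFamily) (n : ℕ) (b : Fin n → Bool) : Bool :=
  @decide
    (∃ σ : ℕ → Bool, ∀ i : Fin n, i.1 + 1 ≤ ndisj (kOf n) → b i = true →
      ∃ p ∈ A.α (kOf n) (i.1 + 1), σ p.1 = p.2)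
    (Classical.propDecidable _)


/-!
Splitting on the parameters `1, …, k` produces `2^k` threads, one for each assignment to
`v_1, …, v_k` (parameter `p` stands for `v_p`). Each thread reads the selected clauses from the
input registers, evaluates them under its assignment with `reply` instructions, and performs
`out.set:true` exactly when it satisfies all of them. As `out` can only be set to `true`, it ends
up `true` under the cyclic interleaving iff some thread sets it, that is, iff the formula is
satisfiable. The instruction sequence has length at most `k + 9 · ndisj k + 2 ≤ 10 n + 2`.
-/

/-- `Runs ι t v`: with inputs `ι`, the thread `t` and all threads split off from it terminate,
and `v` records whether one of them performs `out.set:true`. -/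
inductive Runs (ι : ℕ → Bool) : List PInstr × PEnv → Bool → Prop
  | halt (X : List PInstr) (ρ : PEnv) : Runs ι (.halt :: X, ρ) false
  | jump (l : ℕ) (X : List PInstr) (ρ : PEnv) (v : Bool) :
      Runs ι (X.drop l, ρ) v → Runs ι (.jump (l + 1) :: X, ρ) v
  | negGet (i : ℕ) (X : List PInstr) (ρ : PEnv) (v : Bool) :
      Runs ι (if ι i then X.drop 1 else X, ρ) v → Runs ι (.neg (.get (.inp i)) :: X, ρ) v
  | setOut (X : List PInstr) (ρ : PEnv) (v : Bool) :
      Runs ι (X, ρ) v → Runs ι (.plain (.set .out true) :: X, ρ) true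
  | posReply (p : ℕ) (b : Bool) (X : List PInstr) (ρ : PEnv) (v : Bool) :
      ρ p = some b → Runs ι (if b then X else X.drop 1, ρ) v → Runs ι (.pos (.reply p) :: X, ρ) v
  | negReply (p : ℕ) (b : Bool) (X : List PInstr) (ρ : PEnv) (v : Bool) :
      ρ p = some b → Runs ι (if b then X.drop 1 else X, ρ) v → Runs ι (.neg (.reply p) :: X, ρ) v
  | split (p : ℕ) (X : List PInstr) (ρ : PEnv) (v₁ v₂ : Bool) :
      ρ p = none → Runs ι (X, Function.update ρ p (some true)) v₁ →
      Runs ι (X, Function.update ρ p (some false)) v₂ →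
      Runs ι (.plain (.split p) :: X, ρ) (v₁ || v₂)

def TerminatesWithOut (ts : List (List PInstr × PEnv)) (s : RegState) (b : Bool) : Prop :=
  ∃ fuel s', sexec fuel ts s = some s' ∧ s' .out = b

theorem TerminatesWithOut.of_step {ts ts' : List (List PInstr × PEnv)} {s s₁ : RegState}
    {b : Bool} (hstep : ∀ fuel, sexec (fuel + 1) ts s = sexec fuel ts' s₁)
    (h : TerminatesWithOut ts' s₁ b) : TerminatesWithOut ts s b := by
  obtain ⟨fuel, s', hrun, hout⟩ := h
  exact ⟨fuel + 1, s', (hstep fuel).trans hrun, hout⟩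

/-- A step of `sexec` replaces a thread by at most two threads with strictly shorter instruction
sequences, so this weight decreases. -/
def threadWeight (ts : List (List PInstr × PEnv)) : ℕ := (ts.map fun t => 3 ^ t.1.length).sum

theorem threadWeight_append (ts ts' : List (List PInstr × PEnv)) :
    threadWeight (ts ++ ts') = threadWeight ts + threadWeight ts' := by
  simp [threadWeight]

theorem threadWeight_cons (X : List PInstr) (ρ : PEnv) (ts : List (List PInstr × PEnv)) :
    threadWeight ((X, ρ) :: ts) = 3 ^ X.length + threadWeight ts := rfl

theorem threadWeight_le_length_mul {ts : List (List PInstr × PEnv)} {L : ℕ}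
    (hle : ∀ t ∈ ts, t.1.length ≤ L) : threadWeight ts ≤ ts.length * 3 ^ L := by
  have := List.sum_le_card_nsmul (ts.map fun t => 3 ^ t.1.length) (3 ^ L) (by
    simp only [List.mem_map]
    rintro _ ⟨t, ht, rfl⟩
    exact Nat.pow_le_pow_right (by norm_num) (hle t ht))
  simpa [threadWeight] using this

theorem threadWeight_append_lt {u : PInstr} {X : List PInstr} {ρ : PEnv}
    {ts new : List (List PInstr × PEnv)} (hnew : new.length ≤ 2)
    (hle : ∀ t ∈ new, t.1.length ≤ X.length) :
    threadWeight (ts ++ new) < threadWeight ((u :: X, ρ) :: ts) := by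
  have hpos : 0 < 3 ^ X.length := by positivity
  have : threadWeight new < 3 ^ (X.length + 1) :=
    calc threadWeight new ≤ new.length * 3 ^ X.length := threadWeight_le_length_mul hle
      _ ≤ 2 * 3 ^ X.length := Nat.mul_le_mul_right _ hnew
      _ < 3 ^ (X.length + 1) := by rw [pow_succ]; omega
  rw [threadWeight_append, threadWeight_cons, List.length_cons]
  omega

theorem terminatesWithOut_of_runs {ι : ℕ → Bool} {ts : List (List PInstr × PEnv)}
    {vs : List Bool} {s : RegState} (hs : ∀ i, s (.inp i) = ι i)
    (h : List.Forall₂ (Runs ι) ts vs) : TerminatesWithOut ts s (s .out || vs.or) := by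
  induction hw : threadWeight ts using Nat.strong_induction_on generalizing ts vs s with
  | _ w ih =>
  subst hw
  obtain _ | @⟨⟨X, ρ⟩, v, ts, vs, hrun, hrest⟩ := h
  · exact ⟨1, s, rfl, by simp⟩
  have next : ∀ {new : List (List PInstr × PEnv)} {nvs : List Bool} {s₁ : RegState},
      List.Forall₂ (Runs ι) new nvs →
      (∀ fuel, sexec (fuel + 1) ((X, ρ) :: ts) s = sexec fuel (ts ++ new) s₁) →
      new.length ≤ 2 → (∀ t ∈ new, t.1.length < X.length) → (∀ i, s₁ (.inp i) = ι i) →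
      (s₁ .out || (vs ++ nvs).or) = (s .out || (v :: vs).or) →
      TerminatesWithOut ((X, ρ) :: ts) s (s .out || (v :: vs).or) := by
    intro new nvs s₁ hnew hstep hlen hlt hs₁ hout
    refine .of_step hstep (hout ▸ ?_)
    cases X with
    | nil => cases hrun
    | cons u X =>
      exact ih _ (threadWeight_append_lt hlen fun t ht => Nat.le_of_lt_succ (hlt t ht)) hs₁
        (List.rel_append hrest hnew) rfl
  cases hrun with
  | halt X ρ =>
    exact next .nil (fun _ => by rw [List.append_nil]; rfl) (by simp) (by simp) hs (by simp)
  | jump l X ρ v hrun =>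
    refine .of_step (fun _ => rfl) (ih _ ?_ hs (.cons hrun hrest) rfl)
    rw [threadWeight_cons, threadWeight_cons]
    have := Nat.pow_lt_pow_right (a := 3) (by norm_num)
      (show (X.drop l).length < (PInstr.jump (l + 1) :: X).length by simp)
    omega
  | negGet i X ρ v hrun =>
    exact next (.cons hrun .nil) (fun _ => by rw [← hs i]; rfl) (by simp) (by split <;> simp) hs
      (by simp [List.or, Bool.or_comm, Bool.or_left_comm])
  | setOut X ρ v hrun =>
    exact next (.cons hrun .nil) (fun _ => rfl) (by simp) (by simp)
      (fun i => by simp [BInstr.effect, hs]) (by simp [BInstr.effect])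
  | posReply p b X ρ v hp hrun =>
    exact next (.cons hrun .nil) (fun _ => by simp only [sexec, hp]) (by simp) (by split <;> simp)
      hs (by simp [List.or, Bool.or_comm, Bool.or_left_comm])
  | negReply p b X ρ v hp hrun =>
    exact next (.cons hrun .nil) (fun _ => by simp only [sexec, hp]) (by simp) (by split <;> simp)
      hs (by simp [List.or, Bool.or_comm, Bool.or_left_comm])
  | split p X ρ v₁ v₂ hp hrun₁ hrun₂ =>
    exact next (.cons hrun₁ (.cons hrun₂ .nil)) (fun _ => by simp only [sexec, hp]) (by simp)
      (by simp) hs (by simp [List.or, Bool.or_comm])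

theorem splittingComputes_of_runs {n : ℕ} {f : (Fin n → Bool) → Bool} {X : List PInstr}
    (h : ∀ b, Runs (fun i => initState n b (.inp i)) (X, fun _ => none) (f b)) :
    SplittingComputes f X := fun b => by
  obtain ⟨fuel, s', hrun, hout⟩ :=
    terminatesWithOut_of_runs (s := initState n b) (fun _ => rfl) (.cons (h b) .nil)
  exact ⟨fuel, s', hrun, by simpa [initState] using hout⟩

def litTest : ℕ × Bool → PInstr
  | (p, true) => .pos (.reply p)
  | (p, false) => .neg (.reply p)

def clauseHolds (σ : ℕ → Bool) (L : List (ℕ × Bool)) : Bool := L.any fun q => σ q.1 == q.2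

/-- The jump after a successful test skips the remaining tests `litTests L`, of length
`2 * L.length + 1`. -/
def litTests : List (ℕ × Bool) → List PInstr
  | [] => [.halt]
  | q :: L => litTest q :: .jump (2 * L.length + 2) :: litTests L

theorem length_litTests (L : List (ℕ × Bool)) : (litTests L).length = 2 * L.length + 1 := by
  induction L with
  | nil => rfl
  | cons q L ih => simp [litTests, ih]; ring

def clauseTest (i : ℕ) (L : List (ℕ × Bool)) : List PInstr :=
  .neg (.get (.inp i)) :: .jump (2 * L.length + 2) :: litTests L

def clausesTest : List (ℕ × List (ℕ × Bool)) → List PInstr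
  | [] => [.plain (.set .out true), .halt]
  | (i, L) :: cs => clauseTest i L ++ clausesTest cs

section Runs

variable {ι σ : ℕ → Bool} {ρ : PEnv}

theorem runs_litTest {q : ℕ × Bool} {X : List PInstr} {v : Bool} (hq : ρ q.1 = some (σ q.1))
    (h : Runs ι (if σ q.1 = q.2 then X else X.drop 1, ρ) v) : Runs ι (litTest q :: X, ρ) v := by
  obtain ⟨p, _ | _⟩ := q
  · exact .negReply p (σ p) X ρ v hq (by revert h; cases σ p <;> simp)
  · exact .posReply p (σ p) X ρ v hq (by revert h; cases σ p <;> simp)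

theorem runs_litTests_append {L : List (ℕ × Bool)} {rest : List PInstr} {v : Bool}
    (hL : ∀ q ∈ L, ρ q.1 = some (σ q.1)) (h : Runs ι (rest, ρ) v) :
    Runs ι (litTests L ++ rest, ρ) (clauseHolds σ L && v) := by
  induction L with
  | nil => exact .halt rest ρ
  | cons q L ih =>
    refine runs_litTest (hL q List.mem_cons_self) ?_
    by_cases hq : σ q.1 = q.2
    · rw [if_pos hq]
      have := Runs.jump (2 * L.length + 1) (litTests L ++ rest) ρ v
        (by rwa [List.drop_left' (length_litTests L)])
      simpa [clauseHolds, hq] using this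
    · have hq' : (σ q.1 == q.2) = false := by simpa using hq
      rw [if_neg hq]
      simpa [clauseHolds, hq'] using ih fun q' hq' => hL q' (List.mem_cons_of_mem q hq')

theorem runs_clauseTest_append {i : ℕ} {L : List (ℕ × Bool)} {rest : List PInstr} {v : Bool}
    (hL : ∀ q ∈ L, ρ q.1 = some (σ q.1)) (h : Runs ι (rest, ρ) v) :
    Runs ι (clauseTest i L ++ rest, ρ) ((!ι i || clauseHolds σ L) && v) := by
  refine .negGet i _ ρ _ ?_
  cases ι i
  · have := Runs.jump (2 * L.length + 1) (litTests L ++ rest) ρ v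
      (by rwa [List.drop_left' (length_litTests L)])
    simpa using this
  · simpa using runs_litTests_append hL h

theorem runs_clausesTest {cs : List (ℕ × List (ℕ × Bool))}
    (hcs : ∀ c ∈ cs, ∀ q ∈ c.2, ρ q.1 = some (σ q.1)) :
    Runs ι (clausesTest cs, ρ) (cs.all fun c => !ι c.1 || clauseHolds σ c.2) := by
  induction cs with
  | nil => exact .setOut _ ρ _ (.halt [] ρ)
  | cons c cs ih =>
    obtain ⟨i, L⟩ := c
    simpa [clausesTest] using runs_clauseTest_append (i := i) (hcs _ List.mem_cons_self)
      (ih fun c' hc' => hcs c' (List.mem_cons_of_mem _ hc'))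

open scoped Classical in
theorem runs_splits_append {ps : List ℕ} {X : List PInstr} {F : (ℕ → Bool) → Bool}
    (hps : ps.Nodup) (hnone : ∀ p ∈ ps, ρ p = none)
    (hX : ∀ σ, Runs ι (X, fun p => if p ∈ ps then some (σ p) else ρ p) (F σ)) :
    Runs ι (ps.map (fun p => .plain (.split p)) ++ X, ρ) (decide (∃ σ, F σ = true)) := by
  induction ps generalizing ρ F with
  | nil =>
    by_cases hF : ∃ σ, F σ = true
    · rw [decide_eq_true hF]
      obtain ⟨σ, hσ⟩ := hF
      simpa [hσ] using hX σ
    · rw [decide_eq_false hF]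
      push Not at hF
      simpa [hF] using hX fun _ => false
  | cons p ps ih =>
    obtain ⟨hp, hps⟩ := List.nodup_cons.1 hps
    have branch (b : Bool) := ih (ρ := Function.update ρ p (some b))
      (F := fun σ => F (Function.update σ p b)) hps
      (fun q hq => by
        rw [Function.update_of_ne (ne_of_mem_of_not_mem hq hp)]
        exact hnone q (List.mem_cons_of_mem p hq))
      (fun σ => by
        convert hX (Function.update σ p b) using 2
        funext q
        by_cases hq : q = p
        · subst hq; simp [hp]
        · simp [hq])
    have hval : decide (∃ σ, F σ = true) =
        (decide (∃ σ, F (Function.update σ p true) = true) ||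
          decide (∃ σ, F (Function.update σ p false) = true)) := by
      rw [← Bool.decide_or]
      refine decide_eq_decide.2 ⟨fun ⟨σ, hσ⟩ => ?_, ?_⟩
      · cases h : σ p
        · exact .inr ⟨σ, by rwa [Function.update_eq_self_iff.2 h.symm]⟩
        · exact .inl ⟨σ, by rwa [Function.update_eq_self_iff.2 h.symm]⟩
      · rintro (⟨σ, hσ⟩ | ⟨σ, hσ⟩) <;> exact ⟨_, hσ⟩
    rw [hval]
    exact .split p _ ρ _ _ (hnone p List.mem_cons_self) (branch true) (branch false)

end Runs

def satProgram (k : ℕ) (cs : List (ℕ × List (ℕ × Bool))) : List PInstr :=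
  (List.range' 1 k).map (fun p => .plain (.split p)) ++ clausesTest cs

open scoped Classical in
theorem runs_satProgram {ι : ℕ → Bool} {k : ℕ} {cs : List (ℕ × List (ℕ × Bool))}
    (hcs : ∀ c ∈ cs, ∀ q ∈ c.2, 1 ≤ q.1 ∧ q.1 ≤ k) :
    Runs ι (satProgram k cs, fun _ => none)
      (decide (∃ σ, (cs.all fun c => !ι c.1 || clauseHolds σ c.2) = true)) :=
  runs_splits_append List.nodup_range' (fun _ _ => rfl) fun _ =>
    runs_clausesTest fun c hc q hq => by
      have := hcs c hc q hq
      simp [List.mem_range'_1]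
      omega

theorem instrBasicOK_of_mem_litTests {L : List (ℕ × Bool)} :
    ∀ u ∈ litTests L, InstrBasicOK SisBasic u := by
  induction L with
  | nil => simp [litTests, InstrBasicOK]
  | cons q L ih =>
    obtain ⟨p, _ | _⟩ := q <;> simpa [litTests, litTest, InstrBasicOK, SisBasic] using ih

theorem instrBasicOK_of_mem_clausesTest {cs : List (ℕ × List (ℕ × Bool))} :
    ∀ u ∈ clausesTest cs, InstrBasicOK SisBasic u := by
  induction cs with
  | nil => simp [clausesTest, InstrBasicOK, SisBasic]
  | cons c cs ih =>
    obtain ⟨i, L⟩ := c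
    simpa [clausesTest, clauseTest, InstrBasicOK, SisBasic, or_imp, forall_and] using
      ⟨instrBasicOK_of_mem_litTests, ih⟩

theorem clausesTest_ne_nil : ∀ cs : List (ℕ × List (ℕ × Bool)), clausesTest cs ≠ []
  | [] => by simp [clausesTest]
  | (_, _) :: _ => by simp [clausesTest, clauseTest]

theorem satProgram_mem_SISbr (k : ℕ) (cs : List (ℕ × List (ℕ × Bool))) :
    SISbr (satProgram k cs) := by
  refine ⟨List.append_ne_nil_of_right_ne_nil _ (clausesTest_ne_nil cs), fun u hu => ?_⟩
  rcases List.mem_append.1 hu with hu | hu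
  · obtain ⟨p, -, rfl⟩ := List.mem_map.1 hu
    trivial
  · exact instrBasicOK_of_mem_clausesTest u hu

theorem length_clausesTest_le {cs : List (ℕ × List (ℕ × Bool))}
    (hcs : ∀ c ∈ cs, c.2.length ≤ 3) : (clausesTest cs).length ≤ 9 * cs.length + 2 := by
  induction cs with
  | nil => simp [clausesTest]
  | cons c cs ih =>
    obtain ⟨i, L⟩ := c
    have hL : L.length ≤ 3 := hcs _ List.mem_cons_self
    have := ih fun c hc => hcs c (List.mem_cons_of_mem _ hc)
    simp only [clausesTest, clauseTest, List.cons_append, List.length_cons, List.length_append,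
      length_litTests]
    omega

theorem kOf_le (n : ℕ) : kOf n ≤ n := Nat.findGreatest_le n

theorem ndisj_kOf_le (n : ℕ) : ndisj (kOf n) ≤ n :=
  Nat.findGreatest_spec (P := fun k => ndisj k ≤ n) (Nat.zero_le n) (by simp [ndisj])

/-- Clause `i` is tested against input register `in:(i+1)`, which holds `b_{i+1}`. -/
noncomputable def satClauses (A : AlphaFamily) (n : ℕ) : List (ℕ × List (ℕ × Bool)) :=
  (List.range (ndisj (kOf n))).map fun i => (i, (A.α (kOf n) (i + 1)).toList)

theorem litSetOK_of_mem_satClauses {A : AlphaFamily} {n : ℕ} {c : ℕ × List (ℕ × Bool)}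
    (hc : c ∈ satClauses A n) : ∃ L, c.2 = L.toList ∧ LitSetOK (kOf n) L := by
  obtain ⟨i, hi, rfl⟩ := List.mem_map.1 hc
  exact ⟨_, rfl, A.maps _ _ (by omega) (by simpa using hi)⟩

open scoped Classical in
theorem threeSATC_eq (A : AlphaFamily) (n : ℕ) (b : Fin n → Bool) :
    threeSATC A n b = decide (∃ σ, ((satClauses A n).all
      fun c => !initState n b (.inp c.1) || clauseHolds σ c.2) = true) := by
  unfold threeSATC
  refine decide_eq_decide.2 (exists_congr fun σ => ?_)
  simp only [satClauses, clauseHolds, initState, List.all_map, List.all_eq_true, List.mem_range,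
    Function.comp_apply, Bool.or_eq_true, Bool.not_eq_eq_eq_not, Bool.not_true,
    dite_eq_right_iff, List.any_eq_true, Finset.mem_toList, beq_iff_eq, Prod.exists,
    exists_eq_right', Order.add_one_le_iff]
  constructor
  · intro h x hx
    by_cases hxn : x < n
    · by_cases hb : b ⟨x, hxn⟩ = true
      · exact .inr (h ⟨x, hxn⟩ hx hb)
      · exact .inl fun _ => by simpa using hb
    · exact .inl fun h' => absurd h' hxn
  · intro h i hi hb
    exact (h i hi).resolve_left fun h' => by simp [h' i.2] at hb

/-- Theorem 9 of the paper: 3SATC ∈ PLSIS. -/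
theorem statement7 (A : AlphaFamily) : PLSIS (threeSATC A) := by
  refine ⟨.C 2 + .C 10 * .X, fun n => ⟨satProgram (kOf n) (satClauses A n),
    satProgram_mem_SISbr _ _, splittingComputes_of_runs fun b => ?_, ?_⟩⟩
  · rw [threeSATC_eq]
    refine runs_satProgram fun c hc q hq => ?_
    obtain ⟨L, hL, hok⟩ := litSetOK_of_mem_satClauses hc
    exact hok.2.2 q (by simpa [hL] using hq)
  · have hlen := length_clausesTest_le (cs := satClauses A n) fun c hc => by
      obtain ⟨L, hL, hok⟩ := litSetOK_of_mem_satClauses hc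
      simpa [hL] using hok.2.1
    have := kOf_le n
    have := ndisj_kOf_le n
    rw [satProgram, List.length_append, List.length_map, List.length_range']
    simp only [satClauses, List.length_map, List.length_range, Polynomial.eval_add,
      Polynomial.eval_mul, Polynomial.eval_C, Polynomial.eval_X] at hlen ⊢
    omega
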